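/- Let G = (V,E) be a finite simple graph and let s be a positive integer. Suppose V is partitioned into pairwise disjoint sets X, C_1, …, C_k with |C_i| ≤ s for each i ∈ [k], and let b be the number of edges of G whose two endpoints lie in two distinct sets C_i and C_j (i ≠ j). Then there exists a set X' ⊆ V with |X'| ≤ |X| + b such that every connected component of the subgraph of G induced on V ∖ X' has at most s vertices. -/

import Mathlib

/-! Put one endpoint of every crossing edge into `X`. A walk avoiding the enlarged set can never
leave the part `C i` it ends in: its last step out of `C i` would either start in `X` or run along
a crossing edge, one of whose endpoints has been removed. -/

/-- `u` and `v` are connected in `G` by a walk all of whose vertices avoid `X`. -/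
def ReachAvoiding {V : Type*} (G : SimpleGraph V) (X : Set V) (u v : V) : Prop :=
  ∃ p : G.Walk u v, ∀ t ∈ p.support, t ∉ X

section

variable {V : Type*}

theorem ReachAvoiding.mem_of_mem {G : SimpleGraph V} {Y S : Set V}
    (hS : ∀ a c, G.Adj a c → a ∉ S → c ∈ S → a ∈ Y ∨ c ∈ Y) {u w : V}
    (h : ReachAvoiding G Y u w) (hw : w ∈ S) : u ∈ S := by
  obtain ⟨p, hp⟩ := h
  induction p with
  | nil => exact hw
  | cons hadj q ih =>
    have hc := ih hw fun t ht => hp t (List.mem_cons_of_mem _ ht)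
    by_contra ha
    rcases hS _ _ hadj ha hc with hY | hY
    · exact hp _ (SimpleGraph.Walk.start_mem_support _) hY
    · exact hp _ (by simp) hY

theorem ncard_reachAvoiding_le {G : SimpleGraph V} {Y : Set V} {S : Finset V}
    (hS : ∀ a c, G.Adj a c → a ∉ S → c ∈ S → a ∈ Y ∨ c ∈ Y) {v : V}
    (hv : v ∈ S) :
    {u | ReachAvoiding G Y u v}.ncard ≤ S.card := by
  rw [← Set.ncard_coe_finset]
  exact Set.ncard_le_ncard (fun u hu => hu.mem_of_mem hS hv) S.finite_toSet

theorem Set.Finite.exists_transversal_card_le_ncard [DecidableEq V]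
    {F : Set (Sym2 V)} (hF : F.Finite) :
    ∃ T : Finset V, T.card ≤ F.ncard ∧ ∀ e ∈ F, ∃ a ∈ e, a ∈ T := by
  refine ⟨hF.toFinset.image fun e => e.out.1, ?_, fun e he => ⟨e.out.1, e.out_fst_mem, ?_⟩⟩
  · rw [Set.ncard_eq_toFinset_card F hF]
    exact Finset.card_image_le
  · exact Finset.mem_image_of_mem _ (hF.mem_toFinset.2 he)

end

theorem partition_to_separator_general
    {V : Type*} [Fintype V] [DecidableEq V] (G : SimpleGraph V) (sz : ℕ)
    (k : ℕ) (X : Finset V) (C : Fin k → Finset V)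
    (hCsize : ∀ i, (C i).card ≤ sz)
    (hcover : ∀ v : V, v ∈ X ∨ ∃ i, v ∈ C i)
    (b : ℕ)
    (hb : b = {e ∈ G.edgeSet |
        ∃ u v : V, e = s(u, v) ∧ ∃ i j, i ≠ j ∧ u ∈ C i ∧ v ∈ C j}.ncard) :
    ∃ X' : Finset V, X'.card ≤ X.card + b ∧
      ∀ v : V, v ∉ X' →
        ({u | ReachAvoiding G (↑X' : Set V) u v} : Set V).ncard ≤ sz := by
  obtain ⟨T, hTcard, hT⟩ := Set.Finite.exists_transversal_card_le_ncard (Set.toFinite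
    {e ∈ G.edgeSet | ∃ u v : V, e = s(u, v) ∧ ∃ i j, i ≠ j ∧ u ∈ C i ∧ v ∈ C j})
  refine ⟨X ∪ T, (Finset.card_union_le _ _).trans (by omega), fun v hv => ?_⟩
  obtain hvX | ⟨i, hvi⟩ := hcover v
  · exact absurd (Finset.mem_union_left _ hvX) hv
  refine (ncard_reachAvoiding_le (fun a c hadj ha hc => ?_) hvi).trans (hCsize i)
  obtain haX | ⟨j, haj⟩ := hcover a
  · simp [haX]
  have hji : j ≠ i := by rintro rfl; exact ha haj
  obtain ⟨x, hx, hxT⟩ := hT s(a, c) ⟨hadj, a, c, rfl, j, i, hji, haj, hc⟩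
  rcases Sym2.mem_iff.1 hx with rfl | rfl <;> simp [hxT]

/-- Corollary 7.3: a vertex partition `X, C_1, …, C_k` into parts of size at most `sz` with
`b` crossing edges can be converted into a vertex set `X'` of size at most `|X| + b` whose
removal leaves only connected components of size at most `sz`. -/
theorem partition_to_separator
    {V : Type*} [Fintype V] [DecidableEq V] (G : SimpleGraph V) (sz : ℕ) (hsz : 0 < sz)
    (k : ℕ) (X : Finset V) (C : Fin k → Finset V)
    (hCsize : ∀ i, (C i).card ≤ sz)
    (hCdisj : ∀ i j, i ≠ j → Disjoint (C i) (C j))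
    (hXdisj : ∀ i, Disjoint X (C i))
    (hcover : ∀ v : V, v ∈ X ∨ ∃ i, v ∈ C i)
    (b : ℕ)
    (hb : b = {e ∈ G.edgeSet |
        ∃ u v : V, e = s(u, v) ∧ ∃ i j, i ≠ j ∧ u ∈ C i ∧ v ∈ C j}.ncard) :
    ∃ X' : Finset V, X'.card ≤ X.card + b ∧
      ∀ v : V, v ∉ X' →
        ({u | ReachAvoiding G (↑X' : Set V) u v} : Set V).ncard ≤ sz :=
  partition_to_separator_general G sz k X C hCsize hcover b hb
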